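/- Let a, b ≥ 1, let x be odd with 6 < x ≤ v/2 where v = a + b + 2, and suppose a ≥ 2. Then the multiset {1^a, 2^b, x} is realizable in K_v: there exists a Hamiltonian path on {0,...,v-1} whose multiset of edge-lengths is {1^a, 2^b, x}. -/

import Mathlib

/-!
Start from the path `v-1, v-2, …, x, 0, 1, …, x-1`, whose edges are `x - 1 + (v - x - 1)` edges of
length 1 and the edge `x → 0` of length `x` (here `2x ≤ v`). Replacing the last `k + 1` entries
`y, …, y+k` of a run by the zigzag `y, y+2, y+4, …, y+3, y+1` keeps the vertex set and turns
`k - 1` edges of length 1 into edges of length 2. Splitting `b = b₁ + b₂` with `b₁ ≤ x - 2` and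
`b₂ ≤ v - x - 2`, which is possible exactly because `a ≥ 2`, and zigzagging the end of each of the
two runs gives the required path.
-/

def pathLen (v p q : ℕ) : ℕ := min (Nat.dist p q) (v - Nat.dist p q)

def lengths (v : ℕ) (h : List ℕ) : Multiset ℕ :=
  (List.zipWith (pathLen v) h h.tail : List ℕ)

def IsHamPath (v : ℕ) (h : List ℕ) : Prop :=
  h.Nodup ∧ h.length = v ∧ ∀ p ∈ h, p < v

lemma pathLen_comm (v p q : ℕ) : pathLen v p q = pathLen v q p := by
  simp [pathLen, Nat.dist_comm]

lemma pathLen_of_add_eq {v p q d : ℕ} (h : p + d = q) (hv : 2 * d ≤ v) : pathLen v p q = d := by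
  simp only [pathLen, Nat.dist]
  omega

section lengths

variable (v : ℕ)

@[simp]
lemma lengths_singleton (p : ℕ) : lengths v [p] = 0 := rfl

@[simp]
lemma lengths_cons_cons (p q : ℕ) (l : List ℕ) :
    lengths v (p :: q :: l) = pathLen v p q ::ₘ lengths v (q :: l) := rfl

lemma lengths_cons {p q : ℕ} {l : List ℕ} (h : l.head? = some q) :
    lengths v (p :: l) = pathLen v p q ::ₘ lengths v l := by
  obtain ⟨t, rfl⟩ : ∃ t, l = q :: t := by cases l <;> simp_all
  rfl

lemma lengths_append {l₁ l₂ : List ℕ} {p q : ℕ} (h₁ : l₁.getLast? = some p)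
    (h₂ : l₂.head? = some q) :
    lengths v (l₁ ++ l₂) = lengths v l₁ + lengths v l₂ + {pathLen v p q} := by
  induction l₁ with
  | nil => simp at h₁
  | cons c t ih =>
    cases t with
    | nil =>
      obtain rfl : c = p := by simpa using h₁
      rw [List.singleton_append, lengths_cons v h₂, lengths_singleton, zero_add, add_comm,
        Multiset.singleton_add]
    | cons e t =>
      rw [List.cons_append, List.cons_append, lengths_cons_cons, ← List.cons_append,
        ih (by simpa using h₁), lengths_cons_cons]
      simp only [Multiset.cons_add]

lemma lengths_reverse (l : List ℕ) : lengths v l.reverse = lengths v l := by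
  induction l with
  | nil => rfl
  | cons p t ih =>
    cases t with
    | nil => rfl
    | cons q u =>
      rw [List.reverse_cons, lengths_append v (p := q) (q := p) (by simp) rfl, ih,
        lengths_singleton, add_zero, lengths_cons_cons, pathLen_comm, add_comm,
        Multiset.singleton_add]

end lengths

/-- The paper's `σ_k + y`: up through the even offsets of `y`, then down through the odd ones. -/
def zigzag (y k : ℕ) : List ℕ :=
  match k with
  | 0 => [y]
  | 1 => [y, y + 1]
  | k + 2 => y :: (zigzag (y + 2) k ++ [y + 1])

lemma zigzag_head? (y k : ℕ) : (zigzag y k).head? = some y := by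
  match k with
  | 0 | 1 | _ + 2 => rfl

lemma zigzag_ne_nil (y k : ℕ) : zigzag y k ≠ [] := by
  intro h
  simpa [h] using zigzag_head? y k

lemma zigzag_getLast? (y : ℕ) {k : ℕ} (hk : 1 ≤ k) : (zigzag y k).getLast? = some (y + 1) := by
  match k with
  | 1 => rfl
  | _ + 2 => rw [zigzag, ← List.cons_append]; exact List.getLast?_concat

lemma zigzag_perm (y k : ℕ) : (zigzag y k).Perm (List.range' y (k + 1)) := by
  match k with
  | 0 | 1 => rfl
  | k + 2 =>
    rw [List.range'_succ, List.range'_succ]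
    exact ((List.perm_append_singleton _ _).trans ((zigzag_perm (y + 2) k).cons _)).cons y

lemma lengths_zigzag {v : ℕ} (hv : 4 ≤ v) (y : ℕ) {k : ℕ} (hk : 1 ≤ k) :
    lengths v (zigzag y k) = Multiset.replicate (k - 1) 2 + {1} := by
  have len₁ : ∀ p, pathLen v p (p + 1) = 1 := fun p => pathLen_of_add_eq rfl (by omega)
  have len₂ : ∀ p, pathLen v p (p + 2) = 2 := fun p => pathLen_of_add_eq rfl (by omega)
  match k with
  | 1 => simp [zigzag, len₁]
  | 2 => simp [zigzag, len₁, len₂, pathLen_comm v (_ + 2)]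
  | k + 3 =>
    have hhead : (zigzag (y + 2) (k + 1) ++ [y + 1]).head? = some (y + 2) := by
      rw [List.head?_append_of_ne_nil _ (zigzag_ne_nil _ _), zigzag_head?]
    rw [zigzag, lengths_cons v hhead, lengths_append v (zigzag_getLast? _ (by omega)) rfl,
      lengths_zigzag hv (y + 2) (by omega), len₂, lengths_singleton, add_zero,
      pathLen_comm, show y + 2 + 1 = y + 1 + 2 by ring, len₂, add_comm _ {2},
      Multiset.singleton_add, show k + 3 - 1 = k + 2 by omega, Multiset.replicate_succ,
      Multiset.replicate_succ, Multiset.cons_add, Multiset.cons_add, Nat.add_sub_cancel]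

def runZigzag (y r k : ℕ) : List ℕ := List.range' y r ++ zigzag (y + r) k

lemma runZigzag_succ (y r k : ℕ) : runZigzag y (r + 1) k = y :: runZigzag (y + 1) r k := by
  simp only [runZigzag, List.range'_succ, List.cons_append]
  congr 3
  omega

lemma runZigzag_head? (y r k : ℕ) : (runZigzag y r k).head? = some y := by
  cases r with
  | zero => exact zigzag_head? y k
  | succ r => rw [runZigzag_succ]; rfl

lemma runZigzag_perm (y r k : ℕ) : (runZigzag y r k).Perm (List.range' y (r + k + 1)) := by
  rw [add_assoc, ← List.range'_append_1]
  exact (zigzag_perm (y + r) k).append_left _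

lemma lengths_runZigzag {v : ℕ} (hv : 4 ≤ v) (y r : ℕ) {k : ℕ} (hk : 1 ≤ k) :
    lengths v (runZigzag y r k) = Multiset.replicate (k - 1) 2 + Multiset.replicate (r + 1) 1 := by
  induction r generalizing y with
  | zero => exact lengths_zigzag hv y hk
  | succ r ih =>
    rw [runZigzag_succ, lengths_cons v (runZigzag_head? _ _ _), ih,
      pathLen_of_add_eq rfl (by omega), Multiset.replicate_succ 1 (r + 1), Multiset.add_cons]

lemma isHamPath_of_perm {v : ℕ} {l : List ℕ} (h : l.Perm (List.range v)) : IsHamPath v l :=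
  ⟨h.nodup_iff.mpr List.nodup_range, by simp [h.length_eq],
    fun p hp => List.mem_range.mp (h.subset hp)⟩

theorem exists_isHamPath_lengths_of_le {v x b₁ b₂ : ℕ} (hx : 2 * x ≤ v) (hb₁ : b₁ + 2 ≤ x)
    (hb₂ : x + b₂ + 2 ≤ v) :
    ∃ h : List ℕ, IsHamPath v h ∧ lengths v h =
      Multiset.replicate (v - 2 - (b₁ + b₂)) 1 + Multiset.replicate (b₁ + b₂) 2 + {x} := by
  set r₁ := x - b₁ - 2
  set r₂ := v - x - b₂ - 2
  refine ⟨(runZigzag x r₂ (b₂ + 1)).reverse ++ runZigzag 0 r₁ (b₁ + 1), ?_, ?_⟩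
  · apply isHamPath_of_perm
    have hperm := ((List.reverse_perm _).trans (runZigzag_perm x r₂ (b₂ + 1))).append
      (runZigzag_perm 0 r₁ (b₁ + 1))
    rw [show r₂ + (b₂ + 1) + 1 = v - x by omega, show r₁ + (b₁ + 1) + 1 = x by omega] at hperm
    refine hperm.trans (List.perm_append_comm.trans ?_)
    have hsplit := List.range'_append_1 (s := 0) (m := x) (n := v - x)
    rw [Nat.zero_add, Nat.add_sub_cancel' (by omega)] at hsplit
    rw [List.range_eq_range', ← hsplit]
  · rw [lengths_append v (p := x) (q := 0) (by simp [runZigzag_head?]) (runZigzag_head? _ _ _),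
      lengths_reverse, lengths_runZigzag (by omega) _ _ (by omega),
      lengths_runZigzag (by omega) _ _ (by omega), pathLen_comm, pathLen_of_add_eq (zero_add x) hx,
      Nat.add_sub_cancel, Nat.add_sub_cancel]
    have h₁ : Multiset.replicate (v - 2 - (b₁ + b₂)) 1 =
        Multiset.replicate (r₂ + 1) 1 + Multiset.replicate (r₁ + 1) 1 := by
      rw [← Multiset.replicate_add]
      congr 1
      omega
    rw [h₁, add_comm b₁, Multiset.replicate_add b₂ b₁]
    abel

theorem stmt_13_general (a b x v : ℕ)
    (h6 : 6 < x) (hx2 : x ≤ v / 2) (hv : v = a + b + 2) (ha2 : 2 ≤ a) :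
    ∃ h : List ℕ, IsHamPath v h ∧
      lengths v h = Multiset.replicate a 1 + Multiset.replicate b 2 + {x} := by
  obtain ⟨b₁, b₂, hb₁, hb₂, rfl⟩ : ∃ b₁ b₂, b₁ + 2 ≤ x ∧ x + b₂ + 2 ≤ v ∧ b₁ + b₂ = b :=
    ⟨min b (x - 2), b - min b (x - 2), by omega, by omega, by omega⟩
  have hva : v - 2 - (b₁ + b₂) = a := by omega
  simpa only [hva] using exists_isHamPath_lengths_of_le (by omega) hb₁ hb₂

theorem stmt_13 (a b x v : ℕ) (ha : 1 ≤ a) (hb : 1 ≤ b) (hxodd : Odd x)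
    (h6 : 6 < x) (hx2 : x ≤ v / 2) (hv : v = a + b + 2) (ha2 : 2 ≤ a) :
    ∃ h : List ℕ, IsHamPath v h ∧
      lengths v h = Multiset.replicate a 1 + Multiset.replicate b 2 + {x} :=
  stmt_13_general a b x v h6 hx2 hv ha2
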